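/- Under the same averaging-closure hypothesis on V, any maximizer v* of the utilitarian objective GGF_{1/N} over V whose constant-average version v̄*·1 lies in V satisfies: v̄*·1 attains the maximum of GGF_w over V for every weight vector w in the simplex simultaneously. -/

import Mathlib

/-!
Averaging the objective over the N cyclic rotations `n ↦ n + j` of the indices gives
`(∑ w) · (∑ v) / N`, so some rotation, and hence the minimum over all permutations, is at most
the average of `v`; in particular `GGF_w v ≤ v̄ ≤ v̄*`. On the other hand a constant vector is
unaffected by permutations, so `GGF_w (v̄* · 1) = v̄*`.
-/

open Finset

noncomputable def GGF {N : ℕ} (w v : Fin N → ℝ) : ℝ :=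
  Finset.univ.inf' Finset.univ_nonempty
    (fun σ : Equiv.Perm (Fin N) => ∑ n, w n * v (σ n))

theorem sum_sum_mul_comp_add_right {G R : Type*} [AddGroup G] [Fintype G]
    [NonUnitalNonAssocSemiring R] (w v : G → R) :
    ∑ j, ∑ n, w n * v (n + j) = (∑ n, w n) * ∑ n, v n := by
  rw [sum_comm, Fintype.sum_mul_sum]
  refine sum_congr rfl fun n _ => ?_
  rw [← mul_sum, ← mul_sum]
  exact congrArg _ (Equiv.sum_comp (Equiv.addLeft n) v)

theorem GGF_le_sum_mul_comp_add_right {N : ℕ} [NeZero N] (w v : Fin N → ℝ) (j : Fin N) :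
    GGF w v ≤ ∑ n, w n * v (n + j) :=
  inf'_le _ (mem_univ (Equiv.addRight j))

theorem GGF_const {N : ℕ} {w : Fin N → ℝ} (hw : ∑ n, w n = 1) (c : ℝ) :
    GGF w (fun _ => c) = c := by
  simp only [GGF, ← sum_mul, hw, one_mul, inf'_const]

theorem GGF_le_average {N : ℕ} {w : Fin N → ℝ} (hw : ∑ n, w n = 1) (v : Fin N → ℝ) :
    GGF w v ≤ (1 / N : ℝ) * ∑ n, v n := by
  have : NeZero N := ⟨by rintro rfl; simp at hw⟩
  have hsum : ∑ j : Fin N, ∑ n, w n * v (n + j) = ∑ _j : Fin N, (1 / N : ℝ) * ∑ n, v n := by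
    rw [sum_sum_mul_comp_add_right, hw, sum_const, card_univ, Fintype.card_fin, nsmul_eq_mul,
      one_mul, ← mul_assoc, mul_one_div_cancel (NeZero.ne (N : ℝ)), one_mul]
  obtain ⟨j, -, hj⟩ := exists_le_of_sum_le univ_nonempty hsum.le
  exact (GGF_le_sum_mul_comp_add_right w v j).trans hj

theorem stmt11_general {N : ℕ} (V : Set (Fin N → ℝ))
    (hcl : ∀ v ∈ V, (fun _ : Fin N => (1 / N : ℝ) * ∑ n, v n) ∈ V)
    (vstar : Fin N → ℝ) (hmem : vstar ∈ V)
    (hopt : ∀ v ∈ V, (1 / N : ℝ) * ∑ n, v n ≤ (1 / N : ℝ) * ∑ n, vstar n) :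
    ∀ w : Fin N → ℝ, (∀ n, 0 ≤ w n) → ∑ n, w n = 1 →
      (fun _ : Fin N => (1 / N : ℝ) * ∑ n, vstar n) ∈ V ∧
      ∀ v ∈ V, GGF w v ≤ GGF w (fun _ : Fin N => (1 / N : ℝ) * ∑ n, vstar n) := by
  intro w _ hw
  refine ⟨hcl vstar hmem, fun v hv => ?_⟩
  rw [GGF_const hw]
  exact (GGF_le_average hw v).trans (hopt v hv)

theorem stmt11 {N : ℕ} (hN : 0 < N) (V : Set (Fin N → ℝ)) (hne : V.Nonempty)
    (hcl : ∀ v ∈ V, (fun _ : Fin N => (1 / N : ℝ) * ∑ n, v n) ∈ V)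
    (vstar : Fin N → ℝ) (hmem : vstar ∈ V)
    (hopt : ∀ v ∈ V, (1 / N : ℝ) * ∑ n, v n ≤ (1 / N : ℝ) * ∑ n, vstar n) :
    ∀ w : Fin N → ℝ, (∀ n, 0 ≤ w n) → ∑ n, w n = 1 →
      (fun _ : Fin N => (1 / N : ℝ) * ∑ n, vstar n) ∈ V ∧
      ∀ v ∈ V, GGF w v ≤ GGF w (fun _ : Fin N => (1 / N : ℝ) * ∑ n, vstar n) :=
  stmt11_general V hcl vstar hmem hopt
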